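/- If |h|² is exponentially distributed with mean γ > 0 and Q is the Gaussian tail function, then ρ · E[Q(√(2ρ|h|²))] converges to 1/(4γ) as ρ → ∞. -/

import Mathlib

/-!
Write `Q(s) = 1/2 - (1/√(2π)) ∫_0^s exp(-t²/2) dt` for `s ≥ 0`. The layer cake formula turns
`E[∫_0^S exp(-t²/2) dt]` into `∫_0^∞ exp(-t²/2) P(S > t) dt`, and for `S = √(2ρX)` the tail
`P(X > t²/(2ρ)) = exp(-t²/(2ργ))` is again Gaussian in `t`. Hence
`E[Q(√(2ρX))] = 1/2 - 1/(2√(1 + 1/(ργ)))`, whose expansion in `1/ρ` gives the limit.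
-/

open Real MeasureTheory ProbabilityTheory Filter

/-- The standard Gaussian tail function `Q(x) = (1/√(2π)) ∫_x^∞ exp(-t²/2) dt`. -/
noncomputable def gaussQ (x : ℝ) : ℝ :=
  (Real.sqrt (2 * Real.pi))⁻¹ * ∫ t in Set.Ioi x, Real.exp (-t ^ 2 / 2)

open Set Topology

lemma integrable_exp_neg_sq_div_two : Integrable fun t : ℝ => exp (-t ^ 2 / 2) := by
  simpa [neg_div, div_eq_inv_mul] using integrable_exp_neg_mul_sq (by norm_num : (0 : ℝ) < 1 / 2)

lemma integral_Ioi_exp_neg_sq_div_two :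
    ∫ t in Ioi (0 : ℝ), exp (-t ^ 2 / 2) = √(2 * π) / 2 := by
  have h := integral_gaussian_Ioi (1 / 2)
  rw [show π / (1 / 2) = 2 * π by ring] at h
  simpa [neg_div, div_eq_inv_mul] using h

lemma lintegral_Ioi_ofReal_exp_neg_mul_sq {b : ℝ} (hb : 0 < b) :
    ∫⁻ t in Ioi (0 : ℝ), ENNReal.ofReal (exp (-b * t ^ 2)) = ENNReal.ofReal (√(π / b) / 2) := by
  rw [← integral_gaussian_Ioi, ofReal_integral_eq_lintegral_ofReal
    (integrable_exp_neg_mul_sq hb).integrableOn (ae_of_all _ fun _ => (exp_pos _).le)]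

lemma gaussQ_eq_half_sub {x : ℝ} (hx : 0 ≤ x) :
    gaussQ x = 1 / 2 - (√(2 * π))⁻¹ * ∫ t in (0 : ℝ)..x, exp (-t ^ 2 / 2) := by
  rw [← intervalIntegral.integral_Ioi_sub_Ioi integrable_exp_neg_sq_div_two.integrableOn hx,
    integral_Ioi_exp_neg_sq_div_two, gaussQ]
  have : √(2 * π) ≠ 0 := by positivity
  field_simp
  ring

lemma intervalIntegral_exp_neg_sq_div_two_mem_Icc {x : ℝ} (hx : 0 ≤ x) :
    ∫ t in (0 : ℝ)..x, exp (-t ^ 2 / 2) ∈ Icc 0 (√(2 * π) / 2) := by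
  refine ⟨intervalIntegral.integral_nonneg hx fun _ _ => (exp_pos _).le, ?_⟩
  rw [← integral_Ioi_exp_neg_sq_div_two, ← intervalIntegral.integral_Ioi_sub_Ioi
    integrable_exp_neg_sq_div_two.integrableOn hx]
  exact sub_le_self _ (setIntegral_nonneg measurableSet_Ioi fun _ _ => (exp_pos _).le)

lemma integral_gaussQ_comp {Ω : Type*} [MeasurableSpace Ω] (P : Measure Ω)
    [IsProbabilityMeasure P] {S : Ω → ℝ} (hS : Measurable S) (hS₀ : ∀ ω, 0 ≤ S ω) :
    ∫ ω, gaussQ (S ω) ∂P = 1 / 2 - (√(2 * π))⁻¹ *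
      (∫⁻ t in Ioi 0, P {ω | t < S ω} * ENNReal.ofReal (exp (-t ^ 2 / 2))).toReal := by
  set Φ : ℝ → ℝ := fun x => ∫ t in (0 : ℝ)..x, exp (-t ^ 2 / 2)
  have hΦ : Continuous Φ := intervalIntegral.continuous_primitive
    (fun _ _ => integrable_exp_neg_sq_div_two.intervalIntegrable) 0
  have hΦS : Integrable (fun ω => Φ (S ω)) P := by
    refine .of_bound (hΦ.measurable.comp hS).aestronglyMeasurable (√(2 * π) / 2)
      (ae_of_all _ fun ω => ?_)
    obtain ⟨h₀, h₁⟩ := intervalIntegral_exp_neg_sq_div_two_mem_Icc (hS₀ ω)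
    rwa [Real.norm_of_nonneg h₀]
  calc ∫ ω, gaussQ (S ω) ∂P = ∫ ω, (1 / 2 - (√(2 * π))⁻¹ * Φ (S ω)) ∂P :=
        integral_congr_ae (ae_of_all _ fun ω => gaussQ_eq_half_sub (hS₀ ω))
    _ = 1 / 2 - (√(2 * π))⁻¹ * ∫ ω, Φ (S ω) ∂P := by
        rw [integral_sub (integrable_const _) (hΦS.const_mul _), integral_const_mul]
        simp
    _ = _ := by
        rw [integral_eq_lintegral_of_nonneg_ae
          (ae_of_all _ fun ω => (intervalIntegral_exp_neg_sq_div_two_mem_Icc (hS₀ ω)).1)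
          hΦS.aestronglyMeasurable, lintegral_comp_eq_lintegral_meas_lt_mul P
          (ae_of_all _ hS₀) hS.aemeasurable
          (fun _ _ => integrable_exp_neg_sq_div_two.intervalIntegrable)
          (ae_of_all _ fun _ => (exp_pos _).le)]

lemma measure_lt_sqrt_mul_of_exponential_tail {Ω : Type*} [MeasurableSpace Ω] {P : Measure Ω}
    {X : Ω → ℝ} {γ : ℝ}
    (hX : ∀ t : ℝ, 0 ≤ t → P {ω | X ω > t} = ENNReal.ofReal (exp (-(t / γ))))
    {ρ t : ℝ} (hρ : 0 < ρ) (ht : 0 ≤ t) :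
    P {ω | t < √(2 * ρ * X ω)} = ENNReal.ofReal (exp (-(t ^ 2 / (2 * ρ) / γ))) := by
  rw [← hX _ (by positivity)]
  congr 1
  ext ω
  simp only [mem_ofPred_eq, Real.lt_sqrt ht, gt_iff_lt, div_lt_iff₀ (by positivity : 0 < 2 * ρ)]
  rw [mul_comm]

lemma integral_gaussQ_sqrt_mul_of_exponential_tail {Ω : Type*} [MeasurableSpace Ω]
    (P : Measure Ω) [IsProbabilityMeasure P] {X : Ω → ℝ} (hXm : Measurable X) {γ : ℝ}
    (hγ : 0 < γ) (hX : ∀ t : ℝ, 0 ≤ t → P {ω | X ω > t} = ENNReal.ofReal (exp (-(t / γ))))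
    {ρ : ℝ} (hρ : 0 < ρ) :
    ∫ ω, gaussQ (√(2 * ρ * X ω)) ∂P = 1 / 2 - 1 / 2 * (√(1 + (ρ * γ)⁻¹))⁻¹ := by
  set b := (1 + (ρ * γ)⁻¹) / 2
  have hb : 0 < b := by positivity
  have hlayer : ∫⁻ t in Ioi 0, P {ω | t < √(2 * ρ * X ω)} * ENNReal.ofReal (exp (-t ^ 2 / 2))
      = ∫⁻ t in Ioi 0, ENNReal.ofReal (exp (-b * t ^ 2)) := by
    refine setLIntegral_congr_fun measurableSet_Ioi fun t ht => ?_
    rw [measure_lt_sqrt_mul_of_exponential_tail hX hρ (le_of_lt ht),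
      ← ENNReal.ofReal_mul (exp_pos _).le, ← exp_add]
    congr 2
    simp only [b]
    field_simp
    ring
  rw [integral_gaussQ_comp P (hXm.const_mul _).sqrt fun _ => sqrt_nonneg _, hlayer,
    lintegral_Ioi_ofReal_exp_neg_mul_sq hb, ENNReal.toReal_ofReal (by positivity),
    show π / b = 2 * π / (1 + (ρ * γ)⁻¹) by simp only [b]; field_simp, sqrt_div (by positivity)]
  have : √(2 * π) ≠ 0 := by positivity
  field_simp

lemma tendsto_mul_one_sub_inv_sqrt_one_add_inv :
    Tendsto (fun x : ℝ => x * (1 - (√(1 + x⁻¹))⁻¹)) atTop (𝓝 (1 / 2)) := by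
  have hr : Tendsto (fun x : ℝ => √(1 + x⁻¹)) atTop (𝓝 1) := by
    simpa using (tendsto_inv_atTop_zero.const_add 1).sqrt
  have hlim : Tendsto (fun x : ℝ => (√(1 + x⁻¹) * (√(1 + x⁻¹) + 1))⁻¹) atTop (𝓝 (1 / 2)) := by
    convert (hr.mul (hr.add_const 1)).inv₀ (by norm_num) using 2; norm_num
  refine hlim.congr' ?_
  filter_upwards [eventually_gt_atTop 0] with x hx
  -- with `r = √(1 + 1/x)`, `x (1 - 1/r) = x (r² - 1) / (r (r + 1)) = 1 / (r (r + 1))`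
  have hr0 : 0 < √(1 + x⁻¹) := by positivity
  have hr2 : x * (√(1 + x⁻¹) ^ 2 - 1) = 1 := by
    rw [sq_sqrt (by positivity)]
    field_simp
    ring
  generalize √(1 + x⁻¹) = r at hr2 hr0 ⊢
  field_simp
  linear_combination -hr2

/-- If `X = |h|²` is exponentially distributed with mean `γ > 0`, then
`ρ · E[Q(√(2ρX))] → 1/(4γ)` as `ρ → ∞`. -/
theorem stmt_7 {Ω : Type*} [MeasurableSpace Ω] (P : Measure Ω) [IsProbabilityMeasure P]
    (X : Ω → ℝ) (hXm : Measurable X) (γ : ℝ) (hγ : 0 < γ)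
    (hX : ∀ t : ℝ, 0 ≤ t → P {ω | X ω > t} = ENNReal.ofReal (Real.exp (-(t / γ)))) :
    Tendsto (fun ρ : ℝ => ρ * ∫ ω, gaussQ (Real.sqrt (2 * ρ * X ω)) ∂P)
      atTop (nhds (1 / (4 * γ))) := by
  have hlim := (tendsto_mul_one_sub_inv_sqrt_one_add_inv.comp
    (tendsto_id.atTop_mul_const hγ)).const_mul (2 * γ)⁻¹
  rw [show (2 * γ)⁻¹ * (1 / 2) = 1 / (4 * γ) by ring] at hlim
  refine hlim.congr' ?_
  filter_upwards [eventually_gt_atTop 0] with ρ hρ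
  rw [integral_gaussQ_sqrt_mul_of_exponential_tail P hXm hγ hX hρ]
  simp only [Function.comp_apply, id]
  field_simp
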